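/- arXiv:2509.19824 — 7 statements merged into one kernel-verified Lean document; each statement's English description precedes it below -/
import Mathlib

section
/- Let Z_i = ⟨c_i, G_i⟩ ⊂ ℝ^d be zonotopes with centers c_i ∈ ℝ^d and generator matrices G_i ∈ ℝ^{d×D_i} for i = 1, …, n, where n ≥ 2. Suppose there exist matrices Γ_i ∈ ℝ^{D_n×D_i} for i = 1, …, n−1 and a vector γ ∈ ℝ^{D_n} such that G_i = G_n Γ_i for every i = 1, …, n−1, c_1 + ⋯ + c_{n−1} = c_n + G_n γ, and Σ_{i=1}^{n−1} |Γ_i| 1_{D_i} + |γ| ≤ 1_{D_n} componentwise. Then the Minkowski sum Z_1 ⊕ Z_2 ⊕ ⋯ ⊕ Z_{n−1} is contained in Z_n. -/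
open Matrix Pointwise BigOperators

/-- The zonotope `⟨c, G⟩ = {c + Gξ : ‖ξ‖_∞ ≤ 1}` (sup norm on the Pi type). -/
def zonotope {d D : Type*} [Fintype d] [Fintype D]
    (c : d → ℝ) (G : Matrix d D ℝ) : Set (d → ℝ) :=
  {x | ∃ ξ : D → ℝ, ‖ξ‖ ≤ 1 ∧ x = c + G.mulVec ξ}

/-- Minkowski sum of a finite family of sets. -/
def minkSum {d : Type*} {ι : Type*} [Fintype ι] [AddCommMonoid d]
    (Z : ι → Set d) : Set d :=
  {x | ∃ p : ι → d, (∀ i, p i ∈ Z i) ∧ x = ∑ i, p i}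

/-!
Write a point of `Z₁ ⊕ ⋯ ⊕ Z_{n-1}` as `∑ (cᵢ + Gₙ Γᵢ ξᵢ) = cₙ + Gₙ (∑ Γᵢ ξᵢ + γ)`. The new
coefficient vector `∑ Γᵢ ξᵢ + γ` has `j`-th entry bounded by `∑ᵢ ∑ₖ |Γᵢ j k| + |γ j| ≤ 1`,
because every `ξᵢ` has entries of absolute value at most one.
-/

theorem Matrix.abs_mulVec_apply_le_of_norm_le_one {m n : Type*} [Fintype n]
    (A : Matrix m n ℝ) {ξ : n → ℝ} (hξ : ‖ξ‖ ≤ 1) (j : m) :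
    |(A *ᵥ ξ) j| ≤ ∑ k, |A j k| := by
  have hξk : ∀ k, |ξ k| ≤ 1 := fun k => (norm_le_pi_norm ξ k).trans hξ
  calc |(A *ᵥ ξ) j| = |∑ k, A j k * ξ k| := rfl
    _ ≤ ∑ k, |A j k * ξ k| := Finset.abs_sum_le_sum_abs _ _
    _ ≤ ∑ k, |A j k| := Finset.sum_le_sum fun k _ => by
        rw [abs_mul]
        exact mul_le_of_le_one_right (abs_nonneg _) (hξk k)

theorem norm_sum_mulVec_add_le_one {ι D : Type*} [Fintype ι] [Fintype D]
    {κ : ι → Type*} [∀ i, Fintype (κ i)]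
    (Γ : ∀ i, Matrix D (κ i) ℝ) (γ : D → ℝ) (ξ : ∀ i, κ i → ℝ) (hξ : ∀ i, ‖ξ i‖ ≤ 1)
    (hineq : ∀ j, (∑ i, ∑ k, |Γ i j k|) + |γ j| ≤ 1) :
    ‖(∑ i, Γ i *ᵥ ξ i) + γ‖ ≤ 1 := by
  refine (pi_norm_le_iff_of_nonneg zero_le_one).2 fun j => ?_
  calc ‖((∑ i, Γ i *ᵥ ξ i) + γ) j‖ = |(∑ i, (Γ i *ᵥ ξ i) j) + γ j| := by
        rw [Real.norm_eq_abs, Pi.add_apply, Finset.sum_apply]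
    _ ≤ |∑ i, (Γ i *ᵥ ξ i) j| + |γ j| := abs_add_le _ _
    _ ≤ (∑ i, ∑ k, |Γ i j k|) + |γ j| := by
        gcongr
        refine (Finset.abs_sum_le_sum_abs _ _).trans (Finset.sum_le_sum fun i _ => ?_)
        exact (Γ i).abs_mulVec_apply_le_of_norm_le_one (hξ i) j
    _ ≤ 1 := hineq j

theorem exists_of_mem_minkSum_zonotope {d ι : Type*} [Fintype d] [Fintype ι]
    {κ : ι → Type*} [∀ i, Fintype (κ i)]
    {c : ι → d → ℝ} {G : ∀ i, Matrix d (κ i) ℝ} {x : d → ℝ}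
    (hx : x ∈ minkSum fun i => zonotope (c i) (G i)) :
    ∃ ξ : ∀ i, κ i → ℝ, (∀ i, ‖ξ i‖ ≤ 1) ∧ x = ∑ i, c i + ∑ i, G i *ᵥ ξ i := by
  obtain ⟨p, hp, rfl⟩ := hx
  choose ξ hξ hp using hp
  exact ⟨ξ, hξ, by rw [← Finset.sum_add_distrib]; exact Finset.sum_congr rfl fun i _ => hp i⟩

theorem zonotope_inclusion_general
    {v m : ℕ}
    {Dn : ℕ} {Di : Fin m → ℕ}
    (c : ∀ _ : Fin m, Fin v → ℝ) (G : ∀ i : Fin m, Matrix (Fin v) (Fin (Di i)) ℝ)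
    (cn : Fin v → ℝ) (Gn : Matrix (Fin v) (Fin Dn) ℝ)
    (Γ : ∀ i : Fin m, Matrix (Fin Dn) (Fin (Di i)) ℝ) (γ : Fin Dn → ℝ)
    (hG : ∀ i, G i = Gn * Γ i)
    (hc : (∑ i, c i) = cn + Gn.mulVec γ)
    (hineq : ∀ j, (∑ i, ∑ k, |Γ i j k|) + |γ j| ≤ 1) :
    minkSum (fun i => zonotope (c i) (G i)) ⊆ zonotope cn Gn := by
  intro x hx
  obtain ⟨ξ, hξ, rfl⟩ := exists_of_mem_minkSum_zonotope hx
  refine ⟨(∑ i, Γ i *ᵥ ξ i) + γ, norm_sum_mulVec_add_le_one Γ γ ξ hξ hineq, ?_⟩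
  simp only [hc, hG, ← mulVec_mulVec, mulVec_add, mulVec_sum]
  abel

/-- Lemma 1 (zonotope containment):  if `G i = Gₙ Γ i`,
`∑ cᵢ = cₙ + Gₙ γ` and `∑ |Γᵢ| 1 + |γ| ≤ 1` componentwise, then
`Z₁ ⊕ ⋯ ⊕ Z_{n-1} ⊆ Zₙ`. -/
theorem zonotope_inclusion
    {v m : ℕ} (hm : 1 ≤ m)  -- `m = n - 1`, so `n ≥ 2`
    {Dn : ℕ} {Di : Fin m → ℕ}
    (c : ∀ _ : Fin m, Fin v → ℝ) (G : ∀ i : Fin m, Matrix (Fin v) (Fin (Di i)) ℝ)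
    (cn : Fin v → ℝ) (Gn : Matrix (Fin v) (Fin Dn) ℝ)
    (Γ : ∀ i : Fin m, Matrix (Fin Dn) (Fin (Di i)) ℝ) (γ : Fin Dn → ℝ)
    (hG : ∀ i, G i = Gn * Γ i)
    (hc : (∑ i, c i) = cn + Gn.mulVec γ)
    (hineq : ∀ j, (∑ i, ∑ k, |Γ i j k|) + |γ j| ≤ 1) :
    minkSum (fun i => zonotope (c i) (G i)) ⊆ zonotope cn Gn :=
  zonotope_inclusion_general c G cn Gn Γ γ hG hc hineq
end

section
/- Let c_i ∈ ℝ^d and G_i ∈ ℝ^{d×D_i} for i = 1, …, n with n ≥ 2, set D̄ = 1 + Σ_{i=1}^{n−1} D_i and V = [I_{D̄} −I_{D̄}] ∈ ℝ^{D̄×2D̄}. The following two conditions are equivalent: (a) there exist matrices Γ_i ∈ ℝ^{D_n×D_i} for i = 1, …, n−1 and a vector γ ∈ ℝ^{D_n} such that G_i = G_n Γ_i for every i, Σ_{i=1}^{n−1} c_i = c_n + G_n γ, and Σ_{i=1}^{n−1} |Γ_i| 1_{D_i} + |γ| ≤ 1_{D_n} componentwise; (b) there exists Φ ∈ ℝ^{2D̄×D_n}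 with Φ ≥ 0 entrywise, Φᵀ 1_{2D̄} ≤ 1_{D_n} componentwise, and G_n Φᵀ Vᵀ = [ (Σ_{i=1}^{n−1} c_i − c_n) G_1 ⋯ G_{n−1} ], where the right-hand side is the d×D̄ matrix whose first column is Σ_{i=1}^{n−1} c_i − c_n followed by the blocks G_1, …, G_{n−1}. -/
/-!
Writing `M = Φᵀ Vᵀ`, condition (b) asks for a matrix `M` with `G_n M = [(∑ cᵢ - c_n) G₁ ⋯ G_{n-1}]`
that is a difference `Φ₊ - Φ₋` of entrywise nonnegative matrices whose entries sum to at most one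
in each row of `M`. Since `|x| ≤ x₊ + x₋` with equality for the positive and negative parts of `x`,
such a splitting exists exactly when every row of `M` has absolute sum at most one, and cutting `M`
into its first column `γ` and the blocks `Γᵢ` turns this into condition (a).
-/

open Matrix

section CrossPolytope

variable {β κ : Type*} [Fintype κ]
variable {α : Type*} [AddCommGroup α] [LinearOrder α] [IsOrderedAddMonoid α]

theorem transpose_mul_transpose_fromCols_one_neg_one [DecidableEq κ] {R : Type*} [CommRing R]
    (Φ : Matrix (κ ⊕ κ) β R) :
    Φᵀ * (fromCols (1 : Matrix κ κ R) (-1))ᵀ = (Φ.toRows₁ - Φ.toRows₂)ᵀ := by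
  -- `Φᵀ * _` elaborates with the `CStarMatrix` multiplication instance, so `transpose_mul`
  -- only applies up to defeq.
  calc Φᵀ * (fromCols (1 : Matrix κ κ R) (-1))ᵀ = (fromCols 1 (-1) * Φ)ᵀ := (transpose_mul _ _).symm
    _ = (Φ.toRows₁ - Φ.toRows₂)ᵀ := by
      conv_lhs => rw [← fromRows_toRows Φ, fromCols_mul_fromRows]
      simp [sub_eq_add_neg]

theorem exists_nonneg_transpose_toRows_sub_eq (M : Matrix β κ α) :
    ∃ Φ : Matrix (κ ⊕ κ) β α, (∀ r j, 0 ≤ Φ r j) ∧ (∀ j, ∑ r, Φ r j = ∑ a, |M j a|) ∧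
      (Φ.toRows₁ - Φ.toRows₂)ᵀ = M := by
  refine ⟨fromRows (of fun a j => (M j a)⁺) (of fun a j => (M j a)⁻), ?_, fun j => ?_, ?_⟩
  · rintro (a | a) j
    exacts [posPart_nonneg _, negPart_nonneg _]
  · simp [Fintype.sum_sum_type, ← Finset.sum_add_distrib, posPart_add_negPart]
  · ext j a
    simp [posPart_sub_negPart]

theorem sum_abs_le_sum_of_nonneg (Φ : Matrix (κ ⊕ κ) β α) (hΦ : ∀ r j, 0 ≤ Φ r j) (j : β) :
    ∑ a, |(Φ.toRows₁ - Φ.toRows₂)ᵀ j a| ≤ ∑ r, Φ r j := by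
  rw [Fintype.sum_sum_type, ← Finset.sum_add_distrib]
  refine Finset.sum_le_sum fun a _ => ?_
  calc |Φ (Sum.inl a) j - Φ (Sum.inr a) j|
      ≤ |Φ (Sum.inl a) j| + |Φ (Sum.inr a) j| := abs_sub _ _
    _ = Φ (Sum.inl a) j + Φ (Sum.inr a) j := by rw [abs_of_nonneg (hΦ _ _), abs_of_nonneg (hΦ _ _)]

theorem exists_nonneg_fromCols_one_neg_one_iff [DecidableEq κ] (P : Matrix β κ ℝ → Prop) :
    (∃ Φ : Matrix (κ ⊕ κ) β ℝ, (∀ r j, 0 ≤ Φ r j) ∧ (∀ j, ∑ r, Φ r j ≤ 1) ∧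
        P (Φᵀ * (fromCols (1 : Matrix κ κ ℝ) (-1))ᵀ)) ↔
      ∃ M : Matrix β κ ℝ, (∀ j, ∑ a, |M j a| ≤ 1) ∧ P M := by
  simp only [transpose_mul_transpose_fromCols_one_neg_one]
  constructor
  · rintro ⟨Φ, hΦ, hsum, hP⟩
    exact ⟨_, fun j => (sum_abs_le_sum_of_nonneg Φ hΦ j).trans (hsum j), hP⟩
  · rintro ⟨M, hM, hP⟩
    obtain ⟨Φ, hΦ, hsum, rfl⟩ := exists_nonneg_transpose_toRows_sub_eq M
    exact ⟨Φ, hΦ, fun j => (hsum j).trans_le (hM j), hP⟩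

end CrossPolytope

section SigmaBlockCols

variable {R β : Type*} {ι : Type*} {D : ι → Type*}

/-- The matrix `[γ Γ₁ ⋯ Γₘ]`. -/
def sigmaBlockCols (γ : β → R) (Γ : ∀ i, Matrix β (D i) R) : Matrix β (Unit ⊕ Σ i, D i) R :=
  of fun j => Sum.elim (fun _ => γ j) fun ik => Γ ik.1 j ik.2

theorem sigmaBlockCols_surjective :
    Function.Surjective fun p : (β → R) × (∀ i, Matrix β (D i) R) => sigmaBlockCols p.1 p.2 :=
  fun M => ⟨(fun j => M j (Sum.inl ()), fun i j k => M j (Sum.inr ⟨i, k⟩)), by ext j (a | a) <;> rfl⟩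

theorem sigmaBlockCols_inj {γ γ' : β → R} {Γ Γ' : ∀ i, Matrix β (D i) R} :
    sigmaBlockCols γ Γ = sigmaBlockCols γ' Γ' ↔ γ = γ' ∧ Γ = Γ' := by
  refine ⟨fun h => ⟨?_, ?_⟩, fun ⟨hγ, hΓ⟩ => hγ ▸ hΓ ▸ rfl⟩
  · funext j
    exact congrFun (congrFun h j) (Sum.inl ())
  · funext i j k
    exact congrFun (congrFun h j) (Sum.inr ⟨i, k⟩)

theorem mul_sigmaBlockCols [Fintype β] [NonUnitalNonAssocSemiring R] {n : Type*}
    (A : Matrix n β R) (γ : β → R) (Γ : ∀ i, Matrix β (D i) R) :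
    A * sigmaBlockCols γ Γ = sigmaBlockCols (A *ᵥ γ) (fun i => A * Γ i) := by
  ext r (a | a) <;> rfl

theorem sum_abs_sigmaBlockCols [Fintype ι] [∀ i, Fintype (D i)] [Lattice R] [AddCommGroup R]
    (γ : β → R) (Γ : ∀ i, Matrix β (D i) R) (j : β) :
    ∑ a, |sigmaBlockCols γ Γ j a| = |γ j| + ∑ i, ∑ k, |Γ i j k| := by
  simp [sigmaBlockCols, Fintype.sum_sum_type, Fintype.sum_sigma]

end SigmaBlockCols

/-- The `D̄ = 1 + ∑ Dᵢ` columns of `[ (∑ cᵢ − cₙ)  G₁ ⋯ G_{n−1} ]` are indexed by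
`Unit ⊕ (Σ i, Fin (Di i))`, and `V = [I −I]` is `Matrix.fromCols 1 (-1)`. -/
theorem zonotope_inclusion_cert_equiv_general
    {v m : ℕ}
    {Dn : ℕ} {Di : Fin m → ℕ}
    (c : ∀ _ : Fin m, Fin v → ℝ) (G : ∀ i : Fin m, Matrix (Fin v) (Fin (Di i)) ℝ)
    (cn : Fin v → ℝ) (Gn : Matrix (Fin v) (Fin Dn) ℝ) :
    (∃ (Γ : ∀ i : Fin m, Matrix (Fin Dn) (Fin (Di i)) ℝ) (γ : Fin Dn → ℝ),
        (∀ i, G i = Gn * Γ i) ∧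
        (∑ i, c i) = cn + Gn.mulVec γ ∧
        (∀ j, (∑ i, ∑ k, |Γ i j k|) + |γ j| ≤ 1))
    ↔
    (∃ Φ : Matrix ((Unit ⊕ (Σ i : Fin m, Fin (Di i))) ⊕ (Unit ⊕ (Σ i : Fin m, Fin (Di i))))
        (Fin Dn) ℝ,
        (∀ r j, 0 ≤ Φ r j) ∧
        (∀ j, ∑ r, Φ r j ≤ 1) ∧
        Gn * (Φᵀ * (Matrix.fromCols (1 : Matrix (Unit ⊕ (Σ i : Fin m, Fin (Di i)))
            (Unit ⊕ (Σ i : Fin m, Fin (Di i))) ℝ) (-1))ᵀ :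
            Matrix (Fin Dn) (Unit ⊕ (Σ i : Fin m, Fin (Di i))) ℝ)
          = Matrix.of fun r j =>
              Sum.elim (fun _ : Unit => (∑ i, c i r) - cn r) (fun ik : (Σ i : Fin m, Fin (Di i)) => G ik.1 r ik.2) j) := by
  rw [exists_nonneg_fromCols_one_neg_one_iff (fun M => Gn * M = _)]
  simp_rw [← Finset.sum_apply]
  change _ ↔ ∃ M : Matrix (Fin Dn) (Unit ⊕ Σ i : Fin m, Fin (Di i)) ℝ, _ ∧
    Gn * M = sigmaBlockCols (∑ i, c i - cn) G
  constructor
  · rintro ⟨Γ, γ, hG, hc, hbd⟩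
    refine ⟨sigmaBlockCols γ Γ, fun j => ?_, ?_⟩
    · rw [sum_abs_sigmaBlockCols]
      linarith [hbd j]
    · rw [mul_sigmaBlockCols, sigmaBlockCols_inj]
      exact ⟨eq_sub_of_add_eq' hc.symm, funext fun i => (hG i).symm⟩
  · rintro ⟨M, hbd, hM⟩
    obtain ⟨⟨γ, Γ⟩, rfl⟩ := sigmaBlockCols_surjective M
    rw [mul_sigmaBlockCols, sigmaBlockCols_inj] at hM
    refine ⟨Γ, γ, fun i => (congrFun hM.2 i).symm, by rw [hM.1, add_sub_cancel], fun j => ?_⟩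
    linarith [sum_abs_sigmaBlockCols γ Γ j ▸ hbd j]

/-- Proposition 2: equivalence of the `(Γ, γ)` zonotope-inclusion certificate with the
`Φ` (cross-polytope vertex) certificate.  The `D̄ = 1 + ∑ Dᵢ` columns of the block matrix
`[ (∑ cᵢ − cₙ)  G₁ ⋯ G_{n−1} ]` are indexed by `Unit ⊕ (Σ i, Fin (Di i))` and
`V = [I −I]` is `Matrix.fromColumns 1 (-1)`. -/
theorem zonotope_inclusion_cert_equiv
    {v m : ℕ} (hm : 1 ≤ m)  -- `m = n - 1`, so `n ≥ 2`
    {Dn : ℕ} {Di : Fin m → ℕ}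
    (c : ∀ _ : Fin m, Fin v → ℝ) (G : ∀ i : Fin m, Matrix (Fin v) (Fin (Di i)) ℝ)
    (cn : Fin v → ℝ) (Gn : Matrix (Fin v) (Fin Dn) ℝ) :
    (∃ (Γ : ∀ i : Fin m, Matrix (Fin Dn) (Fin (Di i)) ℝ) (γ : Fin Dn → ℝ),
        (∀ i, G i = Gn * Γ i) ∧
        (∑ i, c i) = cn + Gn.mulVec γ ∧
        (∀ j, (∑ i, ∑ k, |Γ i j k|) + |γ j| ≤ 1))
    ↔
    (∃ Φ : Matrix ((Unit ⊕ (Σ i : Fin m, Fin (Di i))) ⊕ (Unit ⊕ (Σ i : Fin m, Fin (Di i))))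
        (Fin Dn) ℝ,
        (∀ r j, 0 ≤ Φ r j) ∧
        (∀ j, ∑ r, Φ r j ≤ 1) ∧
        Gn * (Φᵀ * (Matrix.fromCols (1 : Matrix (Unit ⊕ (Σ i : Fin m, Fin (Di i)))
            (Unit ⊕ (Σ i : Fin m, Fin (Di i))) ℝ) (-1))ᵀ :
            Matrix (Fin Dn) (Unit ⊕ (Σ i : Fin m, Fin (Di i))) ℝ)
          = Matrix.of fun r j =>
              Sum.elim (fun _ : Unit => (∑ i, c i r) - cn r) (fun ik : (Σ i : Fin m, Fin (Di i)) => G ik.1 r ik.2) j) :=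
  zonotope_inclusion_cert_equiv_general c G cn Gn
end

section
/- Let Z_i(δ_i) = ⟨c_i, G_i diag(δ_i)⟩ ⊂ ℝ^d be scaled zonotopes with c_i ∈ ℝ^d, G_i ∈ ℝ^{d×D_i}, and δ_i ∈ ℝ^{D_i} with δ_i ≥ 0 componentwise, for i = 1, …, n with n ≥ 2. Set D̄ = 1 + Σ_{i=1}^{n−1} D_i and V = [I_{D̄} −I_{D̄}]. If there exists Φ ∈ ℝ^{2D̄×D_n} with Φ ≥ 0 entrywise, Φᵀ 1_{2D̄} ≤ δ_n componentwise, and G_n Φᵀ Vᵀ = [ (Σ_{i=1}^{n−1} c_i − c_n) G_1 diag(δ_1) ⋯ G_{n−1} diag(δ_{n−1}) ], then Z_1(δ_1) ⊕ ⋯ ⊕ Z_{n−1}(δ_{n−1}) ⊆ Z_n(δ_n). -/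
open Matrix Pointwise BigOperators

/-!
Write a point of `Z₁(δ₁) ⊕ ⋯ ⊕ Z_{n−1}(δ_{n−1})` as `cₙ + H η`, where
`H = [∑ cᵢ − cₙ, G₁ diag(δ₁), …]` and `η = (1, ξ₁, …, ξ_{n−1})` has sup norm at most `1`.
By hypothesis `H η = Gₙ ζ` with `ζ = Φᵀ (η, −η)`, and since `Φ ≥ 0` and `Φᵀ 1 ≤ δₙ`,
`|ζⱼ| ≤ (δₙ)ⱼ`; so `ζ = diag(δₙ) ξₙ` for some `ξₙ` in the unit cube.
-/

namespace Zonotope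

variable {d : Type*}

def catCols {ι : Type*} {D : ι → Type*} (G : ∀ i, Matrix d (D i) ℝ) :
    Matrix d (Σ i, D i) ℝ :=
  of fun r ik => G ik.1 r ik.2

theorem catCols_mulVec {ι : Type*} [Fintype ι] {D : ι → Type*} [∀ i, Fintype (D i)]
    (G : ∀ i, Matrix d (D i) ℝ) (ξ : ∀ i, D i → ℝ) :
    catCols G *ᵥ (fun ik => ξ ik.1 ik.2) = ∑ i, G i *ᵥ ξ i := by
  ext r
  simp only [catCols, mulVec, dotProduct, of_apply, Finset.sum_apply,
    ← Finset.univ_sigma_univ, Finset.sum_sigma]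

theorem minkSum_subset_zonotope_catCols [Fintype d] {ι : Type*} [Fintype ι] {D : ι → Type*}
    [∀ i, Fintype (D i)] (c : ι → d → ℝ) (G : ∀ i, Matrix d (D i) ℝ) :
    minkSum (fun i => zonotope (c i) (G i)) ⊆
      zonotope (fun r => ∑ i, c i r) (catCols G) := by
  rintro x ⟨p, hp, rfl⟩
  choose ξ hξ hpξ using hp
  refine ⟨fun ik => ξ ik.1 ik.2, ?_, ?_⟩
  · exact (pi_norm_le_iff_of_nonneg zero_le_one).2
      fun ik => (norm_le_pi_norm (ξ ik.1) ik.2).trans (hξ ik.1)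
  · rw [catCols_mulVec, funext hpξ, Finset.sum_add_distrib]
    ext r
    simp only [Pi.add_apply, Finset.sum_apply]

/-- Moving the center to `c'` costs one extra generator `c − c'` with coefficient `1`. -/
theorem exists_eq_add_mulVec_of_mem_zonotope [Fintype d] {D : Type*} [Fintype D]
    {c : d → ℝ} {G : Matrix d D ℝ} {x : d → ℝ} (hx : x ∈ zonotope c G) (c' : d → ℝ) :
    ∃ η : Unit ⊕ D → ℝ, ‖η‖ ≤ 1 ∧
      x = c' + (of fun r j => Sum.elim (fun _ : Unit => c r - c' r) (G r) j) *ᵥ η := by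
  obtain ⟨ξ, hξ, rfl⟩ := hx
  refine ⟨Sum.elim (fun _ => 1) ξ, ?_, ?_⟩
  · refine (pi_norm_le_iff_of_nonneg zero_le_one).2 ?_
    rintro (_ | k)
    · simp
    · exact (norm_le_pi_norm ξ k).trans hξ
  · ext r
    simp only [Pi.add_apply, mulVec, dotProduct, of_apply, Fintype.sum_sum_type,
      Sum.elim_inl, Sum.elim_inr, Finset.univ_unique, Finset.sum_singleton, mul_one]
    ring

theorem norm_fromCols_one_neg_one_transpose_mulVec_le {n : Type*} [Fintype n]
    [DecidableEq n] (η : n → ℝ) :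
    ‖(fromCols (1 : Matrix n n ℝ) (-1 : Matrix n n ℝ))ᵀ *ᵥ η‖ ≤ ‖η‖ := by
  simp only [transpose_fromCols, fromRows_mulVec, transpose_one, transpose_neg, neg_mulVec,
    one_mulVec]
  refine (pi_norm_le_iff_of_nonneg (norm_nonneg η)).2 ?_
  rintro (r | r)
  · exact norm_le_pi_norm η r
  · simpa using norm_le_pi_norm η r

theorem abs_transpose_mulVec_le_sum {ρ κ : Type*} [Fintype ρ] {Φ : Matrix ρ κ ℝ}
    (hΦ : ∀ r j, 0 ≤ Φ r j) {w : ρ → ℝ} (hw : ‖w‖ ≤ 1) (j : κ) :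
    |(Φᵀ *ᵥ w) j| ≤ ∑ r, Φ r j := by
  rw [mulVec_transpose, vecMul, dotProduct]
  refine (Finset.abs_sum_le_sum_abs _ _).trans (Finset.sum_le_sum fun r _ => ?_)
  rw [abs_mul, abs_of_nonneg (hΦ r j)]
  exact mul_le_of_le_one_left (hΦ r j) ((norm_le_pi_norm w r).trans hw)

theorem add_mulVec_mem_zonotope_mul_diagonal [Fintype d] {D : Type*} [Fintype D] [DecidableEq D]
    (c : d → ℝ) (G : Matrix d D ℝ) {δ ζ : D → ℝ} (hζ : ∀ j, |ζ j| ≤ δ j) :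
    c + G *ᵥ ζ ∈ zonotope c (G * diagonal δ) := by
  refine ⟨ζ / δ, (pi_norm_le_iff_of_nonneg zero_le_one).2 fun j => ?_, ?_⟩
  · rw [Pi.div_apply, Real.norm_eq_abs, abs_div]
    exact div_le_one_of_le₀ ((hζ j).trans (le_abs_self _)) (abs_nonneg _)
  · rw [← mulVec_mulVec]
    congr 2
    ext j
    rw [mulVec_diagonal, Pi.div_apply]
    rcases eq_or_ne (δ j) 0 with hδ | hδ
    · -- `|ζ j| ≤ 0` forces `ζ j = 0`, matching the junk value `ζ j / 0 = 0`
      have : ζ j = 0 := abs_nonpos_iff.mp (hδ ▸ hζ j)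
      simp [this]
    · exact (mul_div_cancel₀ _ hδ).symm

end Zonotope

open Zonotope in
theorem scaled_zonotope_inclusion_general
    {v m : ℕ}
    {Dn : ℕ} {Di : Fin m → ℕ}
    (c : ∀ _ : Fin m, Fin v → ℝ) (G : ∀ i : Fin m, Matrix (Fin v) (Fin (Di i)) ℝ)
    (δ : ∀ i : Fin m, Fin (Di i) → ℝ)
    (cn : Fin v → ℝ) (Gn : Matrix (Fin v) (Fin Dn) ℝ)
    (δn : Fin Dn → ℝ)
    (Φ : Matrix ((Unit ⊕ (Σ i : Fin m, Fin (Di i))) ⊕ (Unit ⊕ (Σ i : Fin m, Fin (Di i))))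
        (Fin Dn) ℝ)
    (hΦpos : ∀ r j, 0 ≤ Φ r j)
    (hΦsum : ∀ j, ∑ r, Φ r j ≤ δn j)
    (hΦeq : Gn * (Φᵀ * (Matrix.fromCols (1 : Matrix (Unit ⊕ (Σ i : Fin m, Fin (Di i)))
        (Unit ⊕ (Σ i : Fin m, Fin (Di i))) ℝ) (-1))ᵀ : Matrix (Fin Dn) (Unit ⊕ (Σ i : Fin m, Fin (Di i))) ℝ)
      = Matrix.of fun r j =>
          Sum.elim (fun _ : Unit => (∑ i, c i r) - cn r)
            (fun ik => (G ik.1 * Matrix.diagonal (δ ik.1)) r ik.2) j) :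
    minkSum (fun i => zonotope (c i) (G i * Matrix.diagonal (δ i)))
      ⊆ zonotope cn (Gn * Matrix.diagonal δn) := by
  intro x hx
  obtain ⟨η, hη, rfl⟩ :=
    exists_eq_add_mulVec_of_mem_zonotope (minkSum_subset_zonotope_catCols c _ hx) cn
  have hw := (norm_fromCols_one_neg_one_transpose_mulVec_le η).trans hη
  have hmem := add_mulVec_mem_zonotope_mul_diagonal cn Gn
    fun j => (abs_transpose_mulVec_le_sum hΦpos hw j).trans (hΦsum j)
  rw [mulVec_mulVec, mulVec_mulVec, Matrix.mul_assoc] at hmem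
  convert hmem using 2
  exact congrArg (· *ᵥ η) hΦeq.symm

/-- Corollary 3 (scaled zonotope containment): if there is an entrywise-nonnegative
`Φ ∈ ℝ^{2D̄×Dₙ}` with `Φᵀ 1 ≤ δₙ` and
`Gₙ Φᵀ Vᵀ = [ (∑ cᵢ − cₙ)  G₁ diag(δ₁) ⋯ G_{n−1} diag(δ_{n−1}) ]`, then
`Z₁(δ₁) ⊕ ⋯ ⊕ Z_{n−1}(δ_{n−1}) ⊆ Zₙ(δₙ)`.  The `D̄ = 1 + ∑ Dᵢ` columns are indexed
by `Unit ⊕ (Σ i, Fin (Di i))` and `V = [I −I]` is `Matrix.fromColumns 1 (-1)`. -/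
theorem scaled_zonotope_inclusion
    {v m : ℕ} (hm : 1 ≤ m)  -- `m = n - 1`, so `n ≥ 2`
    {Dn : ℕ} {Di : Fin m → ℕ}
    (c : ∀ _ : Fin m, Fin v → ℝ) (G : ∀ i : Fin m, Matrix (Fin v) (Fin (Di i)) ℝ)
    (δ : ∀ i : Fin m, Fin (Di i) → ℝ) (hδ : ∀ i k, 0 ≤ δ i k)
    (cn : Fin v → ℝ) (Gn : Matrix (Fin v) (Fin Dn) ℝ)
    (δn : Fin Dn → ℝ) (hδn : ∀ j, 0 ≤ δn j)
    (Φ : Matrix ((Unit ⊕ (Σ i : Fin m, Fin (Di i))) ⊕ (Unit ⊕ (Σ i : Fin m, Fin (Di i))))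
        (Fin Dn) ℝ)
    (hΦpos : ∀ r j, 0 ≤ Φ r j)
    (hΦsum : ∀ j, ∑ r, Φ r j ≤ δn j)
    (hΦeq : Gn * (Φᵀ * (Matrix.fromCols (1 : Matrix (Unit ⊕ (Σ i : Fin m, Fin (Di i)))
        (Unit ⊕ (Σ i : Fin m, Fin (Di i))) ℝ) (-1))ᵀ : Matrix (Fin Dn) (Unit ⊕ (Σ i : Fin m, Fin (Di i))) ℝ)
      = Matrix.of fun r j =>
          Sum.elim (fun _ : Unit => (∑ i, c i r) - cn r)
            (fun ik => (G ik.1 * Matrix.diagonal (δ ik.1)) r ik.2) j) :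
    minkSum (fun i => zonotope (c i) (G i * Matrix.diagonal (δ i)))
      ⊆ zonotope cn (Gn * Matrix.diagonal δn) :=
  scaled_zonotope_inclusion_general c G δ cn Gn δn Φ hΦpos hΦsum hΦeq
end

section
/- Let Z_i(δ_i) = ⟨c_i, G_i diag(δ_i)⟩ ⊂ ℝ^d be scaled zonotopes with c_i ∈ ℝ^d, G_i ∈ ℝ^{d×D_i}, and δ_i ∈ ℝ^{D_i} with δ_i ≥ 0 componentwise, for i = 1, …, n with n ≥ 2. Set D̄ = 1 + Σ_{i=1}^{n−1} D_i and V = [I_{D̄} −I_{D̄}]. Suppose Φ_0 ∈ ℝ^{2D̄×D_n} satisfies Φ_0 ≥ 0 entrywise, Φ_0ᵀ 1_{2D̄} ≤ 1_{D_n} componentwise, and G_n Φ_0ᵀ Vᵀ = [ (Σ_{i=1}^{n−1} c_i − c_n) G_1 ⋯ G_{n−1} ] (with the unscaled generator matrices). If moreover Φ_0ᵀ ( 1_2 ⊗ w ) ≤ δ_n componentwise, where w ∈ ℝ^{D̄} is the vector obtained by stacking the scalar 1 on top of δ_1, …, δ_{n−1} and ⊗ is the Kronecker product (so 1_2 ⊗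 w stacks w twice), then Z_1(δ_1) ⊕ ⋯ ⊕ Z_{n−1}(δ_{n−1}) ⊆ Z_n(δ_n). -/
open Matrix Pointwise BigOperators

/-!
A point of `Z₁(δ₁) ⊕ ⋯ ⊕ Z_{n−1}(δ_{n−1})` is `∑ cᵢ + ∑ Gᵢ ηᵢ` with `|ηᵢ| ≤ δᵢ`. Put
`u = (1, η₁, …, η_{n−1})` and `η = Φ₀ᵀ Vᵀ u`. Since `Vᵀ u = (u, −u)` and `Φ₀ ≥ 0`, we get
`|η| ≤ Φ₀ᵀ (1₂ ⊗ w) ≤ δₙ`, while the certificate equation gives `Gₙ η = ∑ cᵢ − cₙ + ∑ Gᵢ ηᵢ`.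
Hence the point is `cₙ + Gₙ η`, and a parameter bounded by `δₙ` is exactly a point of `Zₙ(δₙ)`.
-/

section Zonotope

variable {d D : Type*} [Fintype d] [Fintype D] [DecidableEq D]

theorem exists_abs_le_of_mem_zonotope_mul_diagonal {c : d → ℝ} {G : Matrix d D ℝ}
    {δ : D → ℝ} (hδ : ∀ k, 0 ≤ δ k) {x : d → ℝ}
    (hx : x ∈ zonotope c (G * diagonal δ)) :
    ∃ η : D → ℝ, (∀ k, |η k| ≤ δ k) ∧ x = c + G *ᵥ η := by
  obtain ⟨ξ, hξ, rfl⟩ := hx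
  refine ⟨δ * ξ, fun k => ?_, ?_⟩
  · have hξk : |ξ k| ≤ 1 := by
      simpa only [Real.norm_eq_abs] using (pi_norm_le_iff_of_nonneg zero_le_one).mp hξ k
    rw [Pi.mul_apply, abs_mul, abs_of_nonneg (hδ k)]
    exact mul_le_of_le_one_right (hδ k) hξk
  · rw [← mulVec_mulVec]
    congr 2
    funext k
    exact mulVec_diagonal δ ξ k

/-- When `δ k = 0` the bound forces `η k = 0`, so the junk value `0 / 0 = 0` is the right
coordinate there. -/
theorem add_mulVec_mem_zonotope_mul_diagonal (c : d → ℝ) (G : Matrix d D ℝ)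
    {δ η : D → ℝ} (hη : ∀ k, |η k| ≤ δ k) :
    c + G *ᵥ η ∈ zonotope c (G * diagonal δ) := by
  refine ⟨η / δ, (pi_norm_le_iff_of_nonneg zero_le_one).mpr fun k => ?_, ?_⟩
  · rw [Real.norm_eq_abs, Pi.div_apply, abs_div]
    exact div_le_one_of_le₀ ((hη k).trans (le_abs_self _)) (abs_nonneg _)
  · rw [← mulVec_mulVec]
    congr 2
    funext k
    rw [mulVec_diagonal]
    rcases eq_or_ne (δ k) 0 with h0 | h0
    · simp [h0, abs_nonpos_iff.mp (h0 ▸ hη k)]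
    · exact (mul_div_cancel₀ _ h0).symm

end Zonotope

theorem abs_mulVec_le_mulVec_of_nonneg {R m n : Type*} [Ring R] [LinearOrder R]
    [IsOrderedRing R] [Fintype n] {A : Matrix m n R} (hA : ∀ i j, 0 ≤ A i j) {x y : n → R}
    (hxy : ∀ j, |x j| ≤ y j) (i : m) : |(A *ᵥ x) i| ≤ (A *ᵥ y) i :=
  calc |∑ j, A i j * x j| ≤ ∑ j, |A i j * x j| := Finset.abs_sum_le_sum_abs _ _
    _ ≤ ∑ j, A i j * y j := Finset.sum_le_sum fun j _ => by
      rw [abs_mul, abs_of_nonneg (hA i j)]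
      exact mul_le_mul_of_nonneg_left (hxy j) (hA i j)

theorem transpose_fromCols_one_neg_one_mulVec {R n : Type*} [Ring R] [Fintype n]
    [DecidableEq n] (u : n → R) :
    (fromCols (1 : Matrix n n R) (-1))ᵀ *ᵥ u = Sum.elim u (-u) := by
  rw [transpose_fromCols, fromRows_mulVec, transpose_one, transpose_neg, transpose_one,
    one_mulVec, neg_mulVec, one_mulVec]

theorem of_sumElim_sigma_mulVec {R d ι : Type*} [Semiring R] [Fintype ι] {D : ι → Type*}
    [∀ i, Fintype (D i)] (a : d → R) (G : ∀ i, Matrix d (D i) R) (η : ∀ i, D i → R) :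
    (of fun r j => Sum.elim (fun _ : Unit => a r) (fun ik : Σ i, D i => G ik.1 r ik.2) j) *ᵥ
        Sum.elim (fun _ => 1) (fun ik => η ik.1 ik.2) = a + ∑ i, G i *ᵥ η i := by
  funext r
  simp [mulVec, dotProduct, Fintype.sum_sigma, Finset.sum_apply]

/-- Columns of the block matrix are indexed by `Unit ⊕ (Σ i, Fin (Di i))`;
`1₂ ⊗ w` is the vector `Sum.elim w w`. -/
theorem scaled_zonotope_inclusion_Phi0_general
    {v m : ℕ}
    {Dn : ℕ} {Di : Fin m → ℕ}
    (c : ∀ _ : Fin m, Fin v → ℝ) (G : ∀ i : Fin m, Matrix (Fin v) (Fin (Di i)) ℝ)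
    (δ : ∀ i : Fin m, Fin (Di i) → ℝ) (hδ : ∀ i k, 0 ≤ δ i k)
    (cn : Fin v → ℝ) (Gn : Matrix (Fin v) (Fin Dn) ℝ)
    (δn : Fin Dn → ℝ)
    (Φ₀ : Matrix ((Unit ⊕ (Σ i : Fin m, Fin (Di i))) ⊕ (Unit ⊕ (Σ i : Fin m, Fin (Di i))))
        (Fin Dn) ℝ)
    (hΦpos : ∀ r j, 0 ≤ Φ₀ r j)
    (hΦeq : Gn * (Φ₀ᵀ * (Matrix.fromCols (1 : Matrix (Unit ⊕ (Σ i : Fin m, Fin (Di i)))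
        (Unit ⊕ (Σ i : Fin m, Fin (Di i))) ℝ) (-1))ᵀ : Matrix (Fin Dn) (Unit ⊕ (Σ i : Fin m, Fin (Di i))) ℝ)
      = Matrix.of fun r j =>
          Sum.elim (fun _ : Unit => (∑ i, c i r) - cn r) (fun ik => G ik.1 r ik.2) j)
    (hΦw : ∀ j, Φ₀ᵀ.mulVec
        (Sum.elim (Sum.elim (fun _ : Unit => (1 : ℝ)) (fun ik => δ ik.1 ik.2))
                  (Sum.elim (fun _ : Unit => (1 : ℝ)) (fun ik => δ ik.1 ik.2))) j
      ≤ δn j) :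
    minkSum (fun i => zonotope (c i) (G i * Matrix.diagonal (δ i)))
      ⊆ zonotope cn (Gn * Matrix.diagonal δn) := by
  rintro _ ⟨p, hp, rfl⟩
  choose η hη hpη using fun i => exists_abs_le_of_mem_zonotope_mul_diagonal (hδ i) (hp i)
  let ι := Unit ⊕ Σ i : Fin m, Fin (Di i)
  let u : ι → ℝ := Sum.elim (fun _ => 1) (fun ik => η ik.1 ik.2)
  have hu : ∀ r, |u r| ≤ Sum.elim (fun _ => 1) (fun ik => δ ik.1 ik.2) r := by
    rintro (_ | ik) <;> simp [u, hη]
  let V := fromCols (1 : Matrix ι ι ℝ) (-1 : Matrix ι ι ℝ)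
  -- `hΦeq` multiplies through a `CStarMatrix` instance; restate it with the plain `Matrix` one.
  have hcert : Gn * (Φ₀ᵀ * Vᵀ) = of fun r j =>
      Sum.elim (fun _ : Unit => ∑ i, c i r - cn r) (fun ik => G ik.1 r ik.2) j := hΦeq
  have hsum : ∑ i, p i = cn + Gn *ᵥ (Φ₀ᵀ *ᵥ (Vᵀ *ᵥ u)) := by
    rw [mulVec_mulVec, mulVec_mulVec, Matrix.mul_assoc, hcert,
      of_sumElim_sigma_mulVec (fun r => ∑ i, c i r - cn r)]
    funext r
    simp only [hpη, Pi.add_apply, Finset.sum_apply, Finset.sum_add_distrib]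
    ring
  rw [hsum]
  refine add_mulVec_mem_zonotope_mul_diagonal cn Gn fun j => (hΦw j).trans' ?_
  rw [transpose_fromCols_one_neg_one_mulVec]
  refine abs_mulVec_le_mulVec_of_nonneg (fun j r => hΦpos r j) ?_ j
  rintro (r | r)
  · exact hu r
  · simpa using hu r

/-- Corollary 4: if `Φ₀` certifies the *unscaled* inclusion (`Φ₀ ≥ 0`, `Φ₀ᵀ 1 ≤ 1`,
`Gₙ Φ₀ᵀ Vᵀ = [ (∑ cᵢ − cₙ)  G₁ ⋯ G_{n−1} ]`) and moreover `Φ₀ᵀ (1₂ ⊗ w) ≤ δₙ`,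
where `w = (1, δ₁, …, δ_{n−1})`, then `Z₁(δ₁) ⊕ ⋯ ⊕ Z_{n−1}(δ_{n−1}) ⊆ Zₙ(δₙ)`.
Columns of the block matrix are indexed by `Unit ⊕ (Σ i, Fin (Di i))`;
`1₂ ⊗ w` is the vector `Sum.elim w w`. -/
theorem scaled_zonotope_inclusion_Phi0
    {v m : ℕ} (hm : 1 ≤ m)  -- `m = n - 1`, so `n ≥ 2`
    {Dn : ℕ} {Di : Fin m → ℕ}
    (c : ∀ _ : Fin m, Fin v → ℝ) (G : ∀ i : Fin m, Matrix (Fin v) (Fin (Di i)) ℝ)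
    (δ : ∀ i : Fin m, Fin (Di i) → ℝ) (hδ : ∀ i k, 0 ≤ δ i k)
    (cn : Fin v → ℝ) (Gn : Matrix (Fin v) (Fin Dn) ℝ)
    (δn : Fin Dn → ℝ) (hδn : ∀ j, 0 ≤ δn j)
    (Φ₀ : Matrix ((Unit ⊕ (Σ i : Fin m, Fin (Di i))) ⊕ (Unit ⊕ (Σ i : Fin m, Fin (Di i))))
        (Fin Dn) ℝ)
    (hΦpos : ∀ r j, 0 ≤ Φ₀ r j)
    (hΦsum : ∀ j, ∑ r, Φ₀ r j ≤ 1)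
    (hΦeq : Gn * (Φ₀ᵀ * (Matrix.fromCols (1 : Matrix (Unit ⊕ (Σ i : Fin m, Fin (Di i)))
        (Unit ⊕ (Σ i : Fin m, Fin (Di i))) ℝ) (-1))ᵀ : Matrix (Fin Dn) (Unit ⊕ (Σ i : Fin m, Fin (Di i))) ℝ)
      = Matrix.of fun r j =>
          Sum.elim (fun _ : Unit => (∑ i, c i r) - cn r) (fun ik => G ik.1 r ik.2) j)
    (hΦw : ∀ j, Φ₀ᵀ.mulVec
        (Sum.elim (Sum.elim (fun _ : Unit => (1 : ℝ)) (fun ik => δ ik.1 ik.2))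
                  (Sum.elim (fun _ : Unit => (1 : ℝ)) (fun ik => δ ik.1 ik.2))) j
      ≤ δn j) :
    minkSum (fun i => zonotope (c i) (G i * Matrix.diagonal (δ i)))
      ⊆ zonotope cn (Gn * Matrix.diagonal δn) :=
  scaled_zonotope_inclusion_Phi0_general c G δ hδ cn Gn δn Φ₀ hΦpos hΦeq hΦw
end

section
/- Consider the discrete-time linear system x⁺ = A x + B u + w with A ∈ ℝ^{n×n}, B ∈ ℝ^{n×m}, feedback gain K ∈ ℝ^{m×n}, and A_K = A + BK, with the control input given by u = ū + K(x − x̄). Let G ∈ ℝ^{n×D}, δ, δ⁺ ∈ ℝ^D with δ ≥ 0 and δ⁺ ≥ 0 componentwise, Δ = diag(δ), Δ⁺ = diag(δ⁺), centers c, c⁺ ∈ ℝ^n, nominal states x̄, x̄⁺ ∈ ℝ^n, nominal input ū ∈ ℝ^m, and zonotopes W = ⟨c_W, G_W⟩ ⊂ ℝ^n, X = ⟨c_X, G_X⟩ ⊂ ℝ^n, U = ⟨c_U, G_U⟩ ⊂ ℝ^m. Then: (i) if ⟨A x̄ + B ū + A_K c, A_K G Δ⟩ ⊕ ⟨c_W,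 G_W⟩ ⊆ ⟨x̄⁺ + c⁺, G Δ⁺⟩, then for every x ∈ {x̄} ⊕ ⟨c, GΔ⟩ and every w ∈ W, the successor state A x + B(ū + K(x − x̄)) + w belongs to {x̄⁺} ⊕ ⟨c⁺, G Δ⁺⟩; (ii) if ⟨x̄ + c, GΔ⟩ ⊆ ⟨c_X, G_X⟩, then every x ∈ {x̄} ⊕ ⟨c, GΔ⟩ belongs to X; (iii) if ⟨ū + K c, K G Δ⟩ ⊆ ⟨c_U, G_U⟩, then for every x ∈ {x̄} ⊕ ⟨c, GΔ⟩ the input u = ū + K(x − x̄) belongs to U. -/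
open Matrix Pointwise BigOperators

/-- Proposition 1: for `x⁺ = Ax + Bu + w` with `u = ū + K(x − x̄)` and `A_K = A + BK`:
(i) the one-step zonotope inclusion implies one-step reachability,
(ii) state-admissibility inclusion implies `x ∈ X`,
(iii) input-admissibility inclusion implies `u ∈ U`. -/
theorem tube_one_step_admissibility
    {n m D Dw DX DU : ℕ}
    (A : Matrix (Fin n) (Fin n) ℝ) (B : Matrix (Fin n) (Fin m) ℝ)
    (K : Matrix (Fin m) (Fin n) ℝ)
    (G : Matrix (Fin n) (Fin D) ℝ)
    (δ δp : Fin D → ℝ) (hδ : ∀ j, 0 ≤ δ j) (hδp : ∀ j, 0 ≤ δp j)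
    (c cp xbar xbarp : Fin n → ℝ) (ubar : Fin m → ℝ)
    (cW : Fin n → ℝ) (GW : Matrix (Fin n) (Fin Dw) ℝ)
    (cX : Fin n → ℝ) (GX : Matrix (Fin n) (Fin DX) ℝ)
    (cU : Fin m → ℝ) (GU : Matrix (Fin m) (Fin DU) ℝ) :
    -- (i) one-step feedforward reachability
    ((zonotope (A.mulVec xbar + B.mulVec ubar + (A + B * K).mulVec c)
        ((A + B * K) * G * Matrix.diagonal δ) + zonotope cW GW
        ⊆ zonotope (xbarp + cp) (G * Matrix.diagonal δp)) →
      ∀ x ∈ ({xbar} : Set (Fin n → ℝ)) + zonotope c (G * Matrix.diagonal δ),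
      ∀ w ∈ zonotope cW GW,
        A.mulVec x + B.mulVec (ubar + K.mulVec (x - xbar)) + w
          ∈ ({xbarp} : Set (Fin n → ℝ)) + zonotope cp (G * Matrix.diagonal δp)) ∧
    -- (ii) state admissibility
    ((zonotope (xbar + c) (G * Matrix.diagonal δ) ⊆ zonotope cX GX) →
      ∀ x ∈ ({xbar} : Set (Fin n → ℝ)) + zonotope c (G * Matrix.diagonal δ),
        x ∈ zonotope cX GX) ∧
    -- (iii) input admissibility
    ((zonotope (ubar + K.mulVec c) (K * G * Matrix.diagonal δ) ⊆ zonotope cU GU) →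
      ∀ x ∈ ({xbar} : Set (Fin n → ℝ)) + zonotope c (G * Matrix.diagonal δ),
        ubar + K.mulVec (x - xbar) ∈ zonotope cU GU) := by
  constructor
  · -- (i)
    intro h x hx w hw
    rw [Set.singleton_add] at hx
    obtain ⟨z, ⟨ξ, hξ, rfl⟩, rfl⟩ := hx
    have hmem : A.mulVec (xbar + (c + (G * Matrix.diagonal δ).mulVec ξ))
        + B.mulVec (ubar + K.mulVec ((xbar + (c + (G * Matrix.diagonal δ).mulVec ξ)) - xbar)) + w
        ∈ zonotope (A.mulVec xbar + B.mulVec ubar + (A + B * K).mulVec c)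
        ((A + B * K) * G * Matrix.diagonal δ) + zonotope cW GW := by
      rw [Set.mem_add]
      refine ⟨_, ⟨ξ, hξ, rfl⟩, w, hw, ?_⟩
      simp only [Matrix.mulVec_add, Matrix.add_mulVec, ← Matrix.mulVec_mulVec,
        add_sub_cancel_left]
      abel
    obtain ⟨η, hη, heq⟩ := h hmem
    rw [Set.singleton_add]
    exact ⟨_, ⟨η, hη, rfl⟩, by rw [heq]; abel⟩
  constructor
  · -- (ii)
    intro h x hx
    rw [Set.singleton_add] at hx
    obtain ⟨z, ⟨ξ, hξ, rfl⟩, rfl⟩ := hx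
    exact h ⟨ξ, hξ, by abel⟩
  · -- (iii)
    intro h x hx
    rw [Set.singleton_add] at hx
    obtain ⟨z, ⟨ξ, hξ, rfl⟩, rfl⟩ := hx
    refine h ⟨ξ, hξ, ?_⟩
    simp only [add_sub_cancel_left, Matrix.mulVec_add, ← Matrix.mulVec_mulVec]
    abel
end

section
/- Let c ∈ ℝ^n, G ∈ ℝ^{n×D}, δ ∈ ℝ^D with δ ≥ 0 componentwise, Δ = diag(δ), F ∈ ℝ^{q×n}, and θ ∈ ℝ^q. Then the scaled zonotope ⟨c, GΔ⟩ is contained in the polyhedron {x ∈ ℝ^n : F x ≤ θ} if and only if F c + |F G| δ ≤ θ componentwise, where |F G| is the entrywise absolute value of the matrix F G. -/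
/-!
Over the zonotope `⟨c, G⟩` the linear functional `x ↦ f ⬝ᵥ x` is bounded by `f ⬝ᵥ c + ‖f G‖₁`
(Hölder for the `ℓ∞`/`ℓ¹` pairing), with equality at the vertex `ξ = sign (f G)`. Applying this
to every row of `F` gives the theorem, since `|F G Δ| = |F G| Δ` for `δ ≥ 0`.
-/

open Matrix BigOperators

section SupportFunction

variable {ι : Type*} [Fintype ι]

lemma dotProduct_le_sum_abs_of_norm_le_one (a : ι → ℝ) {ξ : ι → ℝ} (hξ : ‖ξ‖ ≤ 1) :
    a ⬝ᵥ ξ ≤ ∑ j, |a j| :=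
  Finset.sum_le_sum fun j _ => calc
    a j * ξ j ≤ |a j| * |ξ j| := abs_mul (a j) (ξ j) ▸ le_abs_self _
    _ ≤ |a j| * 1 := by gcongr; exact (norm_le_pi_norm ξ j).trans hξ
    _ = |a j| := mul_one _

lemma norm_sign_comp_le_one (a : ι → ℝ) : ‖fun j => (SignType.sign (a j) : ℝ)‖ ≤ 1 :=
  (pi_norm_le_iff_of_nonneg zero_le_one).2 fun j => by
    rcases lt_trichotomy (a j) 0 with h | h | h <;> simp [h]

lemma dotProduct_sign_comp (a : ι → ℝ) :
    a ⬝ᵥ (fun j => (SignType.sign (a j) : ℝ)) = ∑ j, |a j| :=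
  Finset.sum_congr rfl fun j _ => self_mul_sign (a j)

end SupportFunction

lemma isGreatest_dotProduct_image_zonotope {d D : Type*} [Fintype d] [Fintype D]
    (f c : d → ℝ) (G : Matrix d D ℝ) :
    IsGreatest ((f ⬝ᵥ ·) '' zonotope c G) (f ⬝ᵥ c + ∑ j, |(f ᵥ* G) j|) := by
  have hsplit : ∀ ξ, f ⬝ᵥ (c + G *ᵥ ξ) = f ⬝ᵥ c + (f ᵥ* G) ⬝ᵥ ξ := fun ξ => by
    rw [dotProduct_add, dotProduct_mulVec]
  refine ⟨⟨_, ⟨_, norm_sign_comp_le_one (f ᵥ* G), rfl⟩, ?_⟩, ?_⟩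
  · exact (hsplit _).trans (congrArg _ (dotProduct_sign_comp _))
  · rintro _ ⟨_, ⟨ξ, hξ, rfl⟩, rfl⟩
    exact (hsplit ξ).trans_le (add_le_add le_rfl (dotProduct_le_sum_abs_of_norm_le_one _ hξ))

lemma forall_mem_zonotope_dotProduct_le_iff {d D : Type*} [Fintype d] [Fintype D]
    (f c : d → ℝ) (G : Matrix d D ℝ) (t : ℝ) :
    (∀ x ∈ zonotope c G, f ⬝ᵥ x ≤ t) ↔ f ⬝ᵥ c + ∑ j, |(f ᵥ* G) j| ≤ t := by
  rw [isLUB_le_iff (isGreatest_dotProduct_image_zonotope f c G).isLUB, mem_upperBounds,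
    Set.forall_mem_image]

/-- A scaled zonotope `⟨c, GΔ⟩` is contained in the polyhedron `{x : Fx ≤ θ}` iff
`F c + |F G| δ ≤ θ` componentwise. -/
theorem scaled_zonotope_subset_polyhedron_iff
    {n D q : ℕ}
    (c : Fin n → ℝ) (G : Matrix (Fin n) (Fin D) ℝ)
    (δ : Fin D → ℝ) (hδ : ∀ j, 0 ≤ δ j)
    (F : Matrix (Fin q) (Fin n) ℝ) (θ : Fin q → ℝ) :
    zonotope c (G * Matrix.diagonal δ) ⊆ {x | ∀ i, F.mulVec x i ≤ θ i}
    ↔ ∀ i, F.mulVec c i + ∑ j, |(F * G) i j| * δ j ≤ θ i := by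
  have hrow : ∀ i j, |(F i ᵥ* (G * diagonal δ)) j| = |(F * G) i j| * δ j := fun i j => by
    rw [← vecMul_vecMul, vecMul_diagonal, abs_mul, abs_of_nonneg (hδ j)]
    rfl
  calc zonotope c (G * diagonal δ) ⊆ {x | ∀ i, (F *ᵥ x) i ≤ θ i}
      ↔ ∀ i, ∀ x ∈ zonotope c (G * diagonal δ), F i ⬝ᵥ x ≤ θ i :=
        ⟨fun h i x hx => h hx i, fun h x hx i => h i x hx⟩
    _ ↔ ∀ i, (F *ᵥ c) i + ∑ j, |(F * G) i j| * δ j ≤ θ i :=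
        forall_congr' fun i => by
          rw [forall_mem_zonotope_dotProduct_le_iff]
          simp only [hrow]
          rfl
end

section
/- Let W ⊆ ℝ^n be a nonempty convex set, A_K ∈ ℝ^{n×n}, s ≥ 1 an integer, and 0 < μ < 1 a scalar such that A_K^s W ⊆ μ W, where μ W = {μ w : w ∈ W}. Define F(μ, s) = (1−μ)^{−1} (W ⊕ A_K W ⊕ A_K² W ⊕ ⋯ ⊕ A_K^{s−1} W), where (1−μ)^{−1} S = {(1−μ)^{−1} z : z ∈ S}. Then A_K F(μ, s) ⊕ W ⊆ F(μ, s); that is, F(μ, s) is robust positively invariant for the dynamics z⁺ = A_K z + w with w ∈ W. -/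
open Matrix Pointwise BigOperators

/-- If `W` is nonempty and convex, `0 < μ < 1` and `A_K^s W ⊆ μ W`, then
`F(μ,s) = (1−μ)⁻¹ (W ⊕ A_K W ⊕ ⋯ ⊕ A_K^{s−1} W)` is robust positively invariant:
`A_K F(μ,s) ⊕ W ⊆ F(μ,s)`. -/
theorem mrpi_approx_invariant
    {n : ℕ} (W : Set (Fin n → ℝ)) (hWne : W.Nonempty) (hWconv : Convex ℝ W)
    (AK : Matrix (Fin n) (Fin n) ℝ)
    (s : ℕ) (hs : 1 ≤ s)
    (μ : ℝ) (hμ0 : 0 < μ) (hμ1 : μ < 1)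
    (hcontr : (AK ^ s).mulVec '' W ⊆ μ • W) :
    (AK.mulVec ''
        ((1 - μ)⁻¹ • minkSum (fun ℓ : Fin s => (AK ^ (ℓ : ℕ)).mulVec '' W))) + W
      ⊆ (1 - μ)⁻¹ • minkSum (fun ℓ : Fin s => (AK ^ (ℓ : ℕ)).mulVec '' W) := by
  obtain ⟨t, rfl⟩ : ∃ t, s = t + 1 := ⟨s - 1, (Nat.succ_pred_eq_of_pos hs).symm⟩
  rintro x ⟨a, ⟨b, ⟨z, hz, rfl⟩, rfl⟩, w, hw, rfl⟩
  obtain ⟨p, hp, rfl⟩ := hz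
  choose v hv hveq using hp
  obtain ⟨w', hw', hw'eq⟩ := hcontr ⟨v (Fin.last t), hv _, rfl⟩
  have hμne : (1 - μ) ≠ 0 := by linarith
  -- the new selection
  set q : Fin (t + 1) → (Fin n → ℝ) :=
    Fin.cons (μ • w' + (1 - μ) • w)
      (fun j : Fin t => (AK ^ ((j : ℕ) + 1)).mulVec (v j.castSucc)) with hq
  have hqmem : ∀ i : Fin (t + 1), q i ∈ (AK ^ (i : ℕ)).mulVec '' W := by
    intro i
    refine Fin.cases ?_ ?_ i
    · refine ⟨μ • w' + (1 - μ) • w, hWconv hw' hw hμ0.le (by linarith) (by ring), ?_⟩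
      simp [hq]
    · intro j
      refine ⟨v j.castSucc, hv _, ?_⟩
      simp [hq]
  have key : ∑ i, q i = AK.mulVec (∑ i, p i) + (1 - μ) • w := by
    have hsum : AK.mulVec (∑ i, p i) = ∑ i : Fin (t + 1), (AK ^ ((i : ℕ) + 1)).mulVec (v i) := by
      rw [show AK.mulVec (∑ i, p i) = ∑ i, AK.mulVec (p i) from
        map_sum AK.mulVecLin p Finset.univ]
      refine Finset.sum_congr rfl fun i _ => ?_
      rw [← hveq i, mulVec_mulVec, ← pow_succ']
    rw [hsum, Fin.sum_univ_succ, Fin.sum_univ_castSucc (fun i : Fin (t + 1) =>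
      (AK ^ ((i : ℕ) + 1)).mulVec (v i))]
    simp only [hq, Fin.cons_zero, Fin.cons_succ, Fin.coe_castSucc, Fin.val_last,
      Fin.val_succ]
    rw [← hw'eq]
    abel
  refine ⟨∑ i, q i, ⟨q, hqmem, rfl⟩, ?_⟩
  show (1 - μ)⁻¹ • (∑ i, q i) = AK.mulVec ((1 - μ)⁻¹ • ∑ i, p i) + w
  rw [key, smul_add, smul_smul, inv_mul_cancel₀ hμne, one_smul, ← AK.mulVec_smul]
end
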